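/- Let E be a nonempty finite set of routing entries each in conflict with a fixed entry r and all having the same conflict zone with r. Then any two entries of E are comparable under the specificity (inclusion) ordering; in particular E has a minimum. -/

import Mathlib

/-!
In a conflict the two entries cross: one is strictly more specific in the destination and
strictly less specific in the source, and the conflict zone is the product of the more specific
components. If `e₁` and `e₂` crossed `r` in opposite ways with the same zone, comparing factors
would make a component of `r` equal to a prefix it strictly contains or is strictly contained in.
So they cross `r` the same way, say with zone `d × s_r`; then both have destination `d`, and their
sources, both containing `s_r`, are nested prefixes. A minimal element of a finite set of pairwise
comparable elements is a minimum.
-/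

/-- Addresses are bitvectors of fixed length `n`. -/
abbrev Addr (n : ℕ) := Fin n → Bool

/-- The set of addresses denoted by the prefix `p/plen`. -/
def pset (n : ℕ) (P : Addr n × ℕ) : Set (Addr n) :=
  {a | ∀ i : Fin n, (i : ℕ) < P.2 → a i = P.1 i}

/-- The set of address pairs matched by a destination–source entry. -/
def eset (n : ℕ) (e : (Addr n × ℕ) × (Addr n × ℕ)) : Set (Addr n × Addr n) :=
  pset n e.1 ×ˢ pset n e.2

/-- Conflict: the matched sets intersect and neither contains the other. -/
def Conflict (n : ℕ) (e e' : (Addr n × ℕ) × (Addr n × ℕ)) : Prop :=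
  (eset n e ∩ eset n e').Nonempty ∧ ¬ eset n e ⊆ eset n e' ∧ ¬ eset n e' ⊆ eset n e

theorem Set.prod_ssubset_or_ssubset_of_not_prod_subset {α β : Type*} {a a' : Set α}
    {b b' : Set β} (ha : a ⊆ a' ∨ a' ⊆ a) (hb : b ⊆ b' ∨ b' ⊆ b)
    (h : ¬ a ×ˢ b ⊆ a' ×ˢ b') (h' : ¬ a' ×ˢ b' ⊆ a ×ˢ b) :
    (a ⊂ a' ∧ b' ⊂ b) ∨ (a' ⊂ a ∧ b ⊂ b') := by
  rcases ha with ha | ha <;> rcases hb with hb | hb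
  · exact absurd (Set.prod_mono ha hb) h
  · exact .inl ⟨⟨ha, fun ha' => h' (Set.prod_mono ha' hb)⟩,
      ⟨hb, fun hb' => h (Set.prod_mono ha hb')⟩⟩
  · exact .inr ⟨⟨ha, fun ha' => h (Set.prod_mono ha' hb)⟩,
      ⟨hb, fun hb' => h' (Set.prod_mono ha hb')⟩⟩
  · exact absurd (Set.prod_mono ha hb) h'

section Routing

variable {n : ℕ}

theorem pset_nonempty (P : Addr n × ℕ) : (pset n P).Nonempty :=
  ⟨P.1, fun _ _ => rfl⟩

theorem pset_subset_or_subset {P Q : Addr n × ℕ} (h : (pset n P ∩ pset n Q).Nonempty) :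
    pset n P ⊆ pset n Q ∨ pset n Q ⊆ pset n P := by
  obtain ⟨w, hwP, hwQ⟩ := h
  rcases le_total P.2 Q.2 with hle | hle
  · refine .inr fun a ha i hi => ?_
    rw [ha i (hi.trans_le hle), ← hwQ i (hi.trans_le hle), hwP i hi]
  · refine .inl fun a ha i hi => ?_
    rw [ha i (hi.trans_le hle), ← hwP i (hi.trans_le hle), hwQ i hi]

theorem pset_subset_or_subset_of_subset {P Q R : Addr n × ℕ} (hP : pset n R ⊆ pset n P)
    (hQ : pset n R ⊆ pset n Q) : pset n P ⊆ pset n Q ∨ pset n Q ⊆ pset n P :=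
  pset_subset_or_subset <| (pset_nonempty R).mono (Set.subset_inter hP hQ)

theorem eset_inter_eset (e e' : (Addr n × ℕ) × (Addr n × ℕ)) :
    eset n e ∩ eset n e' = (pset n e.1 ∩ pset n e'.1) ×ˢ (pset n e.2 ∩ pset n e'.2) :=
  Set.prod_inter_prod

theorem Conflict.ssubset_or_ssubset {e r : (Addr n × ℕ) × (Addr n × ℕ)} (h : Conflict n e r) :
    (pset n e.1 ⊂ pset n r.1 ∧ pset n r.2 ⊂ pset n e.2) ∨
      (pset n r.1 ⊂ pset n e.1 ∧ pset n e.2 ⊂ pset n r.2) := by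
  obtain ⟨hint, hne, hne'⟩ := h
  rw [eset_inter_eset] at hint
  exact Set.prod_ssubset_or_ssubset_of_not_prod_subset
    (pset_subset_or_subset hint.fst) (pset_subset_or_subset hint.snd) hne hne'

theorem pset_prod_pset_inj {P P' Q Q' : Addr n × ℕ}
    (h : pset n P ×ˢ pset n Q = pset n P' ×ˢ pset n Q') :
    pset n P = pset n P' ∧ pset n Q = pset n Q' :=
  (Set.prod_eq_prod_iff_of_nonempty ((pset_nonempty P).prod (pset_nonempty Q))).mp h

theorem eset_subset_or_subset_of_conflict_of_inter_eq {e₁ e₂ r : (Addr n × ℕ) × (Addr n × ℕ)}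
    (h₁ : Conflict n e₁ r) (h₂ : Conflict n e₂ r)
    (hzone : eset n e₁ ∩ eset n r = eset n e₂ ∩ eset n r) :
    eset n e₁ ⊆ eset n e₂ ∨ eset n e₂ ⊆ eset n e₁ := by
  rw [eset_inter_eset, eset_inter_eset] at hzone
  rcases h₁.ssubset_or_ssubset with ⟨hd₁, hs₁⟩ | ⟨hd₁, hs₁⟩ <;>
    rcases h₂.ssubset_or_ssubset with ⟨hd₂, hs₂⟩ | ⟨hd₂, hs₂⟩ <;>
    simp only [Set.inter_eq_left.mpr hd₁.subset, Set.inter_eq_left.mpr hd₂.subset,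
      Set.inter_eq_right.mpr hd₁.subset, Set.inter_eq_right.mpr hd₂.subset,
      Set.inter_eq_left.mpr hs₁.subset, Set.inter_eq_left.mpr hs₂.subset,
      Set.inter_eq_right.mpr hs₁.subset, Set.inter_eq_right.mpr hs₂.subset] at hzone
  · rw [eset, eset, (pset_prod_pset_inj hzone).1]
    exact (pset_subset_or_subset_of_subset hs₁.subset hs₂.subset).imp
      Set.prod_mono_right Set.prod_mono_right
  · exact absurd (pset_prod_pset_inj hzone).1 hd₁.ne
  · exact absurd (pset_prod_pset_inj hzone).1.symm hd₂.ne
  · rw [eset, eset, (pset_prod_pset_inj hzone).2]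
    exact (pset_subset_or_subset_of_subset hd₁.subset hd₂.subset).imp
      Set.prod_mono_left Set.prod_mono_left

end Routing

/-- If `E` is a nonempty finite set of entries, each in conflict with a fixed
    entry `r` and all sharing the same conflict zone with `r`, then any two
    entries of `E` are comparable by specificity; in particular `E` has a
    minimum. -/
theorem stmt15 (n : ℕ) (r : (Addr n × ℕ) × (Addr n × ℕ))
    (E : Finset ((Addr n × ℕ) × (Addr n × ℕ))) (hne : E.Nonempty)
    (hconf : ∀ e ∈ E, Conflict n e r)
    (hzone : ∀ e₁ ∈ E, ∀ e₂ ∈ E, eset n e₁ ∩ eset n r = eset n e₂ ∩ eset n r) :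
    (∀ e₁ ∈ E, ∀ e₂ ∈ E, eset n e₁ ⊆ eset n e₂ ∨ eset n e₂ ⊆ eset n e₁) ∧
    ∃ m ∈ E, ∀ e ∈ E, eset n m ⊆ eset n e := by
  have htotal : ∀ e₁ ∈ E, ∀ e₂ ∈ E, eset n e₁ ⊆ eset n e₂ ∨ eset n e₂ ⊆ eset n e₁ :=
    fun e₁ h₁ e₂ h₂ => eset_subset_or_subset_of_conflict_of_inter_eq
      (hconf e₁ h₁) (hconf e₂ h₂) (hzone e₁ h₁ e₂ h₂)
  obtain ⟨m, hm, hmin⟩ := E.exists_minimalFor (eset n) hne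
  exact ⟨htotal, m, hm, fun e he => (htotal m hm e he).elim id (hmin he)⟩
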